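/- arXiv:quant-ph/0403021 — 7 statements merged into one kernel-verified Lean document; each statement's English description precedes it below -/
import Mathlib

section
/- Let P and Q be orthogonal projections on a complex Hilbert space such that PQP = QPQ. Then PQ = QP. -/
/-! With `a = p q (1 - p)` one has `a⋆ a = (1 - p) (q p q) (1 - p)`; if `q p q = p q p` this
vanishes, so `a = 0` by the C⋆-identity, i.e. `p q = p q p`. Exchanging the roles of `p` and `q`
gives `q p = q p q`, and the two equal sides `p q p = q p q` then force `p q = q p`. -/

namespace IsStarProjection

variable {R : Type*} [NormedRing R] [StarRing R] [CStarRing R] {p q : R}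

theorem mul_mul_self_eq_mul_of_mul_mul_eq (hp : IsStarProjection p) (hq : IsSelfAdjoint q)
    (h : q * p * q = p * q * p) : p * q * p = p * q := by
  have hp' : IsSelfAdjoint (1 - p) := hp.one_sub.isSelfAdjoint
  have key : star (p * q * (1 - p)) * (p * q * (1 - p)) = 0 := by
    calc star (p * q * (1 - p)) * (p * q * (1 - p))
        = (1 - p) * (q * (p * p) * q) * (1 - p) := by
          simp only [star_mul, hp'.star_eq, hq.star_eq, hp.isSelfAdjoint.star_eq]; noncomm_ring
      _ = (1 - p) * p * (q * p * (1 - p)) := by rw [hp.isIdempotentElem.eq, h]; noncomm_ring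
      _ = 0 := by rw [hp.one_sub_mul_self, zero_mul]
  have hzero := (CStarRing.star_mul_self_eq_zero_iff _).mp key
  rw [mul_sub, mul_one, sub_eq_zero] at hzero
  exact hzero.symm

theorem commute_of_mul_mul_eq (hp : IsStarProjection p) (hq : IsStarProjection q)
    (h : p * q * p = q * p * q) : Commute p q := by
  calc p * q = p * q * p := (hp.mul_mul_self_eq_mul_of_mul_mul_eq hq.isSelfAdjoint h.symm).symm
    _ = q * p * q := h
    _ = q * p := hq.mul_mul_self_eq_mul_of_mul_mul_eq hp.isSelfAdjoint h

end IsStarProjection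

/-- Davies: if `PQP = QPQ` for orthogonal projections `P`, `Q` on a complex
Hilbert space, then `PQ = QP`. -/
theorem davies_commute {H : Type*} [NormedAddCommGroup H] [InnerProductSpace ℂ H]
    [CompleteSpace H] (P Q : H →L[ℂ] H)
    (hPsa : ContinuousLinearMap.adjoint P = P) (hPidem : P * P = P)
    (hQsa : ContinuousLinearMap.adjoint Q = Q) (hQidem : Q * Q = Q)
    (h : P * Q * P = Q * P * Q) :
    P * Q = Q * P :=
  IsStarProjection.commute_of_mul_mul_eq ⟨hPidem, hPsa⟩ ⟨hQidem, hQsa⟩ h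
end

section
/- Let P and Q be orthogonal projections on a complex Hilbert space. If for every positive trace-class operator ρ with trace 1 we have Tr(P Q ρ Q P) = Tr(Q P ρ P Q), then PQ = QP. -/
open Matrix ComplexOrder

private lemma trace_mul_outer {n : ℕ} (M : Matrix (Fin n) (Fin n) ℂ) (x : Fin n → ℂ) :
    (M * vecMulVec x (star x)).trace = star x ⬝ᵥ (M *ᵥ x) := by
  simp only [Matrix.trace, Matrix.diag, Matrix.mul_apply, vecMulVec_apply, dotProduct, mulVec,
    Pi.star_apply, Finset.mul_sum]
  refine Finset.sum_congr rfl fun k _ => Finset.sum_congr rfl fun l _ => ?_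
  ring

private lemma outer_posSemidef {n : ℕ} (x : Fin n → ℂ) :
    (vecMulVec x (star x)).PosSemidef := by
  have : vecMulVec x (star x) = replicateCol Unit x * (replicateCol Unit x)ᴴ := by
    rw [vecMulVec_eq Unit, conjTranspose_replicateCol]
  rw [this]
  exact posSemidef_self_mul_conjTranspose _

private lemma trace_outer {n : ℕ} (x : Fin n → ℂ) :
    (vecMulVec x (star x)).trace = star x ⬝ᵥ x := by
  simp [Matrix.trace, Matrix.diag, vecMulVec_apply, dotProduct, mul_comm]

private lemma eq_of_forall_quad {n : ℕ} (M : Matrix (Fin n) (Fin n) ℂ)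
    (hq : ∀ x : Fin n → ℂ, star x ⬝ᵥ (M *ᵥ x) = 0) : M = 0 := by
  have hT : Matrix.toEuclideanLin M = 0 := by
    rw [← inner_map_self_eq_zero]
    intro v
    rw [inner_eq_zero_symm, EuclideanSpace.inner_eq_star_dotProduct,
      ofLp_toEuclideanLin_apply, dotProduct_comm]
    exact hq _
  simpa using congrArg Matrix.toEuclideanLin.symm hT

/-- Davies/Kirkpatrick: if `Tr(PQρQP) = Tr(QPρPQ)` for every density operator
`ρ`, then the projections `P` and `Q` commute. -/
theorem davies_trace_commute {n : ℕ} (P Q : Matrix (Fin n) (Fin n) ℂ)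
    (hPsa : Pᴴ = P) (hPidem : P * P = P) (hQsa : Qᴴ = Q) (hQidem : Q * Q = Q)
    (h : ∀ ρ : Matrix (Fin n) (Fin n) ℂ, ρ.PosSemidef → ρ.trace = 1 →
      (P * Q * ρ * Q * P).trace = (Q * P * ρ * P * Q).trace) :
    P * Q = Q * P := by
  -- Step 1: the hypothesis says Tr((QPQ)ρ) = Tr((PQP)ρ) for density ρ
  have hkey : ∀ ρ : Matrix (Fin n) (Fin n) ℂ, ρ.PosSemidef → ρ.trace = 1 →
      (Q * P * Q * ρ).trace = (P * Q * P * ρ).trace := by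
    intro ρ hρ ht
    have e1 : (P * Q * ρ * Q * P).trace = (Q * P * Q * ρ).trace := by
      rw [trace_mul_comm, ← mul_assoc, ← mul_assoc, ← mul_assoc, hPidem,
        trace_mul_comm, ← mul_assoc, ← mul_assoc]
    have e2 : (Q * P * ρ * P * Q).trace = (P * Q * P * ρ).trace := by
      rw [trace_mul_comm, ← mul_assoc, ← mul_assoc, ← mul_assoc, hQidem,
        trace_mul_comm, ← mul_assoc, ← mul_assoc]
    rw [← e1, ← e2]; exact h ρ hρ ht
  -- Step 2: the quadratic form of QPQ - PQP vanishes
  have hquad : ∀ x : Fin n → ℂ, star x ⬝ᵥ ((Q * P * Q - P * Q * P) *ᵥ x) = 0 := by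
    intro x
    by_cases hx : x = 0
    · simp [hx]
    · set c : ℂ := star x ⬝ᵥ x with hc
      have hc0 : c ≠ 0 := fun hzero => hx (dotProduct_star_self_eq_zero.mp hzero)
      have hcpos : (0:ℂ) ≤ c := dotProduct_star_self_nonneg x
      have hinv : (0:ℂ) ≤ c⁻¹ := by
        rw [Complex.nonneg_iff] at hcpos ⊢
        constructor
        · simp only [Complex.inv_re]
          exact div_nonneg hcpos.1 (Complex.normSq_nonneg c)
        · simp [Complex.inv_im, ← hcpos.2]
      have hstarinv : star c⁻¹ = c⁻¹ := by
        rw [Complex.nonneg_iff] at hinv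
        exact Complex.conj_eq_iff_im.mpr hinv.2.symm
      have hρpsd : (c⁻¹ • vecMulVec x (star x)).PosSemidef := by
        refine .of_dotProduct_mulVec_nonneg ?_ fun y => ?_
        · rw [Matrix.IsHermitian, conjTranspose_smul, (outer_posSemidef x).1, hstarinv]
        · rw [smul_mulVec, dotProduct_smul, smul_eq_mul]
          exact mul_nonneg hinv ((outer_posSemidef x).dotProduct_mulVec_nonneg y)
      have hρtr : (c⁻¹ • vecMulVec x (star x)).trace = 1 := by
        rw [trace_smul, trace_outer, ← hc, smul_eq_mul, inv_mul_cancel₀ hc0]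
      have := hkey _ hρpsd hρtr
      rw [Matrix.mul_smul, Matrix.mul_smul, trace_smul, trace_smul,
        trace_mul_outer, trace_mul_outer] at this
      rw [smul_eq_mul, smul_eq_mul] at this
      have heq : star x ⬝ᵥ ((Q * P * Q) *ᵥ x) = star x ⬝ᵥ ((P * Q * P) *ᵥ x) :=
        mul_left_cancel₀ (inv_ne_zero hc0) this
      rw [sub_mulVec, dotProduct_sub, heq, sub_self]
  -- Step 3: QPQ = PQP
  have hM : Q * P * Q = P * Q * P :=
    sub_eq_zero.mp (eq_of_forall_quad _ hquad)
  -- Step 4: D = PQ - QP squares to zero, and is skew-adjoint, hence zero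
  have e1 : P * Q * (P * Q) = P * Q * P := by
    calc P * Q * (P * Q) = P * (Q * P * Q) := by simp only [mul_assoc]
      _ = P * (P * Q * P) := by rw [hM]
      _ = P * P * (Q * P) := by simp only [mul_assoc]
      _ = P * Q * P := by rw [hPidem]; simp only [mul_assoc]
  have e2 : P * Q * (Q * P) = P * Q * P := by
    calc P * Q * (Q * P) = P * (Q * Q) * P := by simp only [mul_assoc]
      _ = P * Q * P := by rw [hQidem]
  have e3 : Q * P * (P * Q) = P * Q * P := by
    calc Q * P * (P * Q) = Q * (P * P) * Q := by simp only [mul_assoc]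
      _ = Q * P * Q := by rw [hPidem]
      _ = P * Q * P := hM
  have e4 : Q * P * (Q * P) = P * Q * P := by
    calc Q * P * (Q * P) = Q * (P * Q * P) := by simp only [mul_assoc]
      _ = Q * (Q * P * Q) := by rw [hM]
      _ = Q * Q * (P * Q) := by simp only [mul_assoc]
      _ = Q * P * Q := by rw [hQidem]; simp only [mul_assoc]
      _ = P * Q * P := hM
  have hD2 : (P * Q - Q * P) * (P * Q - Q * P) = 0 := by
    simp only [sub_mul, mul_sub, e1, e2, e3, e4, sub_self]
  have hDadj : (P * Q - Q * P)ᴴ = -(P * Q - Q * P) := by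
    simp [conjTranspose_sub, conjTranspose_mul, hPsa, hQsa]
  have : (P * Q - Q * P)ᴴ * (P * Q - Q * P) = 0 := by
    rw [hDadj, neg_mul, hD2, neg_zero]
  have := conjTranspose_mul_self_eq_zero.mp this
  exact sub_eq_zero.mp this
end

section
/- Let (P_j)_{j∈J} be a finite orthogonal resolution of the identity and Q an orthogonal projection on a finite-dimensional complex Hilbert space. Fix j ∈ J. If for every density operator ρ with Tr(P_j ρ P_j Q) ≠ 0 and every j' we have Tr(Q P_j ρ P_j Q P_{j'}) = δ_{j j'} · Tr(P_j ρ P_j Q), then P_j Q = Q P_j. -/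
open Matrix ComplexOrder

private lemma trace_conjTranspose_mul_self_eq_zero' {m k : Type*} [Fintype m] [Fintype k]
    {A : Matrix m k ℂ} (h : (Aᴴ * A).trace = 0) : A = 0 := by
  have h' : ∑ p : k × m, star (A p.2 p.1) * A p.2 p.1 = 0 := by
    rw [Fintype.sum_prod_type]
    simpa [Matrix.trace, Matrix.diag, Matrix.mul_apply, Matrix.conjTranspose_apply] using h
  have h2 := (Fintype.sum_eq_zero_iff_of_nonneg (fun p => star_mul_self_nonneg _)).mp h'
  ext i jj
  have h3 := congr_fun h2 (jj, i)
  simp only [Pi.zero_apply, mul_eq_zero, star_eq_zero] at h3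
  simpa using h3.elim id id

/-- Lüders' non-disturbing measurement theorem: if a measurement of `Q`
yielding its value does not disturb a previously established value `p_j`
(the conditional probability condition holds for every density operator),
then `P_j` commutes with `Q`. -/
theorem luders_nondisturbance {n : ℕ} {J : Type*} [Fintype J] [DecidableEq J]
    (P : J → Matrix (Fin n) (Fin n) ℂ) (Q : Matrix (Fin n) (Fin n) ℂ)
    (hPsa : ∀ j, (P j)ᴴ = P j) (hPidem : ∀ j, P j * P j = P j)
    (hPorth : ∀ j j', j ≠ j' → P j * P j' = 0)
    (hPsum : ∑ j, P j = 1)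
    (hQsa : Qᴴ = Q) (hQidem : Q * Q = Q) (j : J)
    (h : ∀ ρ : Matrix (Fin n) (Fin n) ℂ, ρ.PosSemidef → ρ.trace = 1 →
      (P j * ρ * P j * Q).trace ≠ 0 →
      ∀ j', (Q * P j * ρ * P j * Q * P j').trace =
        (if j = j' then 1 else 0) * (P j * ρ * P j * Q).trace) :
    P j * Q = Q * P j := by
  have hPidem' : ∀ a (X : Matrix (Fin n) (Fin n) ℂ), P a * (P a * X) = P a * X :=
    fun a X => by rw [← mul_assoc, hPidem]
  have hQidem' : ∀ (X : Matrix (Fin n) (Fin n) ℂ), Q * (Q * X) = Q * X :=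
    fun X => by rw [← mul_assoc, hQidem]
  by_cases hc : (P j * Q * P j).trace = 0
  · -- degenerate case: P j * Q * P j has zero trace, so Q * P j = 0 and P j * Q = 0
    have key : (Q * P j)ᴴ * (Q * P j) = P j * Q * P j := by
      rw [conjTranspose_mul, hPsa, hQsa]
      rw [mul_assoc, hQidem', ← mul_assoc]
    have hz : Q * P j = 0 := trace_conjTranspose_mul_self_eq_zero' (by rw [key]; exact hc)
    have hz2 : P j * Q = 0 := by
      have := congrArg conjTranspose hz
      simpa [conjTranspose_mul, hPsa, hQsa] using this
    rw [hz, hz2]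
  · have hn : (n : ℂ) ≠ 0 := by
      intro h0
      apply hc
      have : n = 0 := Nat.cast_eq_zero.mp h0
      subst this
      simp [Matrix.trace]
    set c : ℂ := (n : ℂ)⁻¹ with hcdef
    have hcne : c ≠ 0 := inv_ne_zero hn
    set ρ : Matrix (Fin n) (Fin n) ℂ := c • 1 with hρdef
    have hρpsd : ρ.PosSemidef := by
      refine posSemidef_iff_dotProduct_mulVec.mpr ⟨?_, ?_⟩
      · have : (starRingEnd ℂ) c = c := by
          simp [hcdef, Complex.conj_inv]
        simp [hρdef, Matrix.IsHermitian, conjTranspose_smul, this]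
      · intro x
        simp only [hρdef, smul_mulVec, one_mulVec, dotProduct_smul, smul_eq_mul]
        refine mul_nonneg ?_ (dotProduct_star_self_nonneg x)
        have : c = ((n : ℝ)⁻¹ : ℝ) := by push_cast [hcdef]; ring
        rw [this]
        exact_mod_cast Complex.zero_le_real.mpr (by positivity)
    have hρtr : ρ.trace = 1 := by
      simp [hρdef, Matrix.trace_smul, Matrix.trace_one, hcdef]
      exact inv_mul_cancel₀ hn
    have hexp1 : P j * ρ * P j * Q = c • (P j * Q) := by
      simp only [hρdef, Matrix.mul_smul, Matrix.smul_mul, mul_one, hPidem]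
    have htrPQ : (P j * Q).trace = (P j * Q * P j).trace := by
      rw [Matrix.trace_mul_cycle (P j) Q (P j), hPidem]
    have hne : (P j * ρ * P j * Q).trace ≠ 0 := by
      rw [hexp1, Matrix.trace_smul, smul_eq_mul, htrPQ]
      exact mul_ne_zero hcne hc
    have horth : ∀ j', j ≠ j' → P j' * Q * P j = 0 := by
      intro j' hjj'
      have hh := h ρ hρpsd hρtr hne j'
      rw [if_neg hjj', zero_mul] at hh
      have hexp2 : Q * P j * ρ * P j * Q * P j' = c • (Q * P j * Q * P j') := by
        simp only [hρdef, Matrix.mul_smul, Matrix.smul_mul, mul_one]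
        rw [mul_assoc Q (P j) (P j), hPidem]
      rw [hexp2, Matrix.trace_smul, smul_eq_mul, mul_eq_zero] at hh
      have htr0 : (Q * P j * Q * P j').trace = 0 := hh.resolve_left hcne
      have key : (P j' * Q * P j)ᴴ * (P j' * Q * P j) = P j * Q * P j' * Q * P j := by
        rw [conjTranspose_mul, conjTranspose_mul, hPsa, hPsa, hQsa]
        simp only [mul_assoc]
        rw [hPidem' j']
      have htr0' : ((P j' * Q * P j)ᴴ * (P j' * Q * P j)).trace = 0 := by
        rw [key]
        calc (P j * Q * P j' * Q * P j).trace
            = (P j * (P j * Q * P j' * Q)).trace :=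
              Matrix.trace_mul_comm (P j * Q * P j' * Q) (P j)
          _ = (P j * Q * P j' * Q).trace := by
              simp only [← mul_assoc]; rw [hPidem]
          _ = (Q * P j * Q * P j').trace := by
              rw [Matrix.trace_mul_comm (P j * Q * P j') Q]; simp only [← mul_assoc]
          _ = 0 := htr0
      exact trace_conjTranspose_mul_self_eq_zero' htr0'
    have hQP : Q * P j = P j * Q * P j := by
      calc Q * P j = 1 * (Q * P j) := (one_mul _).symm
        _ = ∑ j', P j' * (Q * P j) := by rw [← hPsum, Finset.sum_mul]
        _ = P j * (Q * P j) := by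
            refine Finset.sum_eq_single j (fun j' _ hjj' => ?_) (by simp)
            rw [← mul_assoc, horth j' (Ne.symm hjj')]
        _ = P j * Q * P j := by rw [mul_assoc]
    have hPQ : P j * Q = P j * Q * P j := by
      have := congrArg conjTranspose hQP
      simpa [conjTranspose_mul, hPsa, hQsa, ← mul_assoc] using this
    rw [hPQ, hQP]
end

section
/- Let (Q_s) be a finite orthogonal resolution of the identity and P an orthogonal projection on a finite-dimensional complex Hilbert space. If ∑_s Q_s P Q_s = P, then P Q_k = Q_k P for every k. -/
/-!
Compressing `∑ s, Q s * P * Q s = P` by `Q k` on the left kills every summand but the `k`-th,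
so `Q k * P = Q k * P * Q k`; compressing on the right gives `P * Q k = Q k * P * Q k` likewise.
-/

namespace OrthogonalIdempotents

variable {R S : Type*} [Semiring R] [Fintype S] {e : S → R}

theorem mul_sum_mul (he : OrthogonalIdempotents e) (x : S → R) (k : S) :
    e k * ∑ s, e s * x s = e k * x k := by
  rw [Finset.mul_sum, Finset.sum_eq_single k]
  · rw [← mul_assoc, (he.idem k).eq]
  · intro s _ hsk
    rw [← mul_assoc, he.ortho hsk.symm, zero_mul]
  · simp

theorem sum_mul_mul (he : OrthogonalIdempotents e) (x : S → R) (k : S) :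
    (∑ s, x s * e s) * e k = x k * e k := by
  rw [Finset.sum_mul, Finset.sum_eq_single k]
  · rw [mul_assoc, (he.idem k).eq]
  · intro s _ hsk
    rw [mul_assoc, he.ortho hsk, mul_zero]
  · simp

theorem commute_of_sum_mul_mul_eq (he : OrthogonalIdempotents e) {p : R}
    (hp : ∑ s, e s * p * e s = p) (k : S) : Commute p (e k) := by
  have left : e k * p = e k * p * e k := by
    conv_lhs => rw [← hp]
    simpa only [mul_assoc] using he.mul_sum_mul (fun s => p * e s) k
  have right : p * e k = e k * p * e k :=
    (congrArg (· * e k) hp.symm).trans (he.sum_mul_mul (fun s => e s * p) k)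
  exact right.trans left.symm

end OrthogonalIdempotents

open Matrix ComplexOrder

theorem luders_ignored_core_general {n : ℕ} {S : Type*} [Fintype S]
    (Q : S → Matrix (Fin n) (Fin n) ℂ) (P : Matrix (Fin n) (Fin n) ℂ)
    (hQidem : ∀ s, Q s * Q s = Q s)
    (hQorth : ∀ s s', s ≠ s' → Q s * Q s' = 0)
    (h : ∑ s, Q s * P * Q s = P) :
    ∀ k, P * Q k = Q k * P :=
  (OrthogonalIdempotents.mk hQidem hQorth).commute_of_sum_mul_mul_eq h

/-- Operator core of Lüders' ignored-measurement theorem: if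
`∑_s Q_s P Q_s = P` then `P` commutes with each `Q_k`. -/
theorem luders_ignored_core {n : ℕ} {S : Type*} [Fintype S]
    (Q : S → Matrix (Fin n) (Fin n) ℂ) (P : Matrix (Fin n) (Fin n) ℂ)
    (hQsa : ∀ s, (Q s)ᴴ = Q s) (hQidem : ∀ s, Q s * Q s = Q s)
    (hQorth : ∀ s s', s ≠ s' → Q s * Q s' = 0)
    (hQsum : ∑ s, Q s = 1)
    (hPsa : Pᴴ = P) (hPidem : P * P = P)
    (h : ∑ s, Q s * P * Q s = P) :
    ∀ k, P * Q k = Q k * P :=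
  luders_ignored_core_general Q P hQidem hQorth h
end

section
/- Let (Q_s) be a finite orthogonal resolution of the identity and P an orthogonal projection on a finite-dimensional complex Hilbert space. If for every density operator ρ we have ∑_s Tr(Q_s ρ Q_s P) = Tr(ρ P), then P Q_k = Q_k P for every k. -/
open Matrix ComplexOrder

lemma outer_psd {n : ℕ} (v : Fin n → ℂ) : (vecMulVec v (star v)).PosSemidef := by
  rw [vecMulVec_eq (Fin 1), ← conjTranspose_replicateCol]
  exact posSemidef_self_mul_conjTranspose _

lemma outer_trace_mul {n : ℕ} (v : Fin n → ℂ) (A : Matrix (Fin n) (Fin n) ℂ) :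
    (vecMulVec v (star v) * A).trace = star v ⬝ᵥ A *ᵥ v := by
  simp only [Matrix.trace, Matrix.diag, Matrix.mul_apply, vecMulVec_apply,
    dotProduct, Matrix.mulVec, Pi.star_apply]
  rw [Finset.sum_comm]
  congr 1; ext j
  rw [Finset.mul_sum]
  congr 1; ext i
  ring

lemma quad_zero_eq_zero {n : ℕ} (A : Matrix (Fin n) (Fin n) ℂ)
    (h : ∀ v : Fin n → ℂ, star v ⬝ᵥ A *ᵥ v = 0) : A = 0 := by
  have q : ∀ v : Fin n → ℂ, ∑ j, ∑ i, (starRingEnd ℂ) (v j) * A j i * v i = 0 := by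
    intro v
    have := h v
    simpa [dotProduct, Matrix.mulVec, Finset.mul_sum, mul_assoc, mul_comm, mul_left_comm]
      using this
  have diag : ∀ i, A i i = 0 := by
    intro i
    have := q (Pi.single i 1)
    simpa [Pi.single_apply, Finset.sum_ite_eq', Finset.sum_ite_eq] using this
  ext a b
  by_cases hab : a = b
  · simp [hab, diag]
  · have key2 : ∀ x y : ℂ,
        (starRingEnd ℂ) x * A a a * x + (starRingEnd ℂ) x * A a b * y +
          ((starRingEnd ℂ) y * A b a * x + (starRingEnd ℂ) y * A b b * y) = 0 := by
      intro x y
      have hsub : ∀ (g : Fin n → ℂ), (∀ j, j ≠ a → j ≠ b → g j = 0) →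
          ∑ j, g j = g a + g b := by
        intro g hg
        rw [← Finset.sum_pair (fun h => hab h)]
        refine (Finset.sum_subset (Finset.subset_univ _) ?_).symm
        intro j _ hj
        simp only [Finset.mem_insert, Finset.mem_singleton, not_or] at hj
        exact hg j hj.1 hj.2
      set v : Fin n → ℂ := fun j => if j = a then x else if j = b then y else 0 with hv
      have hva : v a = x := by simp [hv]
      have hba : b ≠ a := fun h => hab h.symm
      have hvb : v b = y := by simp [hv, hba]
      have hv0 : ∀ j, j ≠ a → j ≠ b → v j = 0 := by intro j h1 h2; simp [hv, h1, h2]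
      have := q v
      rw [hsub _ (fun j h1 h2 => by simp [hv0 j h1 h2]),
        hsub _ (fun i h1 h2 => by simp [hv0 i h1 h2]),
        hsub _ (fun i h1 h2 => by simp [hv0 i h1 h2]), hva, hvb] at this
      exact this
    have e1 : A a b + A b a = 0 := by
      have := key2 1 1; simpa [diag a, diag b] using this
    have e2 : A a b * Complex.I - Complex.I * A b a = 0 := by
      have := key2 1 Complex.I
      rw [diag a, diag b] at this
      simp only [RingHom.map_one, Complex.conj_I, one_mul, mul_one, mul_zero, zero_mul,
        add_zero, zero_add, neg_mul] at this
      linear_combination this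
    have e3 : A a b - A b a = 0 := by
      have hI : Complex.I * (A a b - A b a) = 0 := by linear_combination e2
      rcases mul_eq_zero.mp hI with hI' | h0
      · exact absurd hI' Complex.I_ne_zero
      · exact h0
    have : A a b = 0 := by linear_combination (e1 + e3) / 2
    simpa using this

lemma herm_trace_zero {n : ℕ} (A : Matrix (Fin n) (Fin n) ℂ)
    (h : ∀ ρ : Matrix (Fin n) (Fin n) ℂ, ρ.PosSemidef → ρ.trace = 1 → (ρ * A).trace = 0) :
    A = 0 := by
  apply quad_zero_eq_zero
  intro v
  rw [← outer_trace_mul]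
  by_cases hv : v = 0
  · have h0 : vecMulVec v (star v) = 0 := by
      ext i j; simp [vecMulVec_apply, hv]
    rw [h0, Matrix.zero_mul, Matrix.trace_zero]
  · set c : ℝ := ∑ i, Complex.normSq (v i) with hc
    have hcpos : 0 < c := by
      have : ∃ i, v i ≠ 0 := by
        by_contra hcon
        push_neg at hcon
        exact hv (funext hcon)
      obtain ⟨i, hi⟩ := this
      exact Finset.sum_pos' (fun j _ => Complex.normSq_nonneg _)
        ⟨i, Finset.mem_univ i, Complex.normSq_pos.mpr hi⟩
    set w : Fin n → ℂ := (Real.sqrt c)⁻¹ • v with hw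
    have hsq : ((Real.sqrt c : ℂ))⁻¹ * ((Real.sqrt c : ℂ))⁻¹ = (c : ℂ)⁻¹ := by
      rw [← mul_inv]
      norm_cast
      rw [Real.mul_self_sqrt hcpos.le]
    have houter : vecMulVec w (star w) = ((c : ℂ))⁻¹ • vecMulVec v (star v) := by
      ext i j
      simp only [vecMulVec_apply, hw, Pi.star_apply, Pi.smul_apply, Matrix.smul_apply,
        Complex.real_smul, star_mul', Complex.star_def, map_inv₀, Complex.conj_ofReal,
        smul_eq_mul, Complex.ofReal_inv]
      linear_combination v i * (starRingEnd ℂ) (v j) * hsq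
    have htr : (vecMulVec w (star w)).trace = 1 := by
      rw [houter, Matrix.trace_smul]
      have htrv : (vecMulVec v (star v)).trace = (c : ℂ) := by
        simp only [Matrix.trace, Matrix.diag, vecMulVec_apply, Pi.star_apply, hc]
        push_cast
        congr 1; ext i
        rw [mul_comm, Complex.normSq_eq_conj_mul_self]
        rfl
      rw [htrv, smul_eq_mul, inv_mul_cancel₀]
      exact_mod_cast hcpos.ne'
    have h0 := h _ (outer_psd w) htr
    rw [houter, Matrix.smul_mul, Matrix.trace_smul, smul_eq_mul] at h0
    have hcne : ((c : ℂ))⁻¹ ≠ 0 := by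
      simp only [ne_eq, inv_eq_zero]
      exact_mod_cast hcpos.ne'
    exact (mul_eq_zero.mp h0).resolve_left hcne

/-- Lüders' ignored-measurement theorem: if a preceding ignored measurement of
`Q` does not affect the probability of `p` for any density operator, then `P`
commutes with each `Q_k`. -/
theorem luders_ignored {n : ℕ} {S : Type*} [Fintype S]
    (Q : S → Matrix (Fin n) (Fin n) ℂ) (P : Matrix (Fin n) (Fin n) ℂ)
    (hQsa : ∀ s, (Q s)ᴴ = Q s) (hQidem : ∀ s, Q s * Q s = Q s)
    (hQorth : ∀ s s', s ≠ s' → Q s * Q s' = 0)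
    (hQsum : ∑ s, Q s = 1)
    (hPsa : Pᴴ = P) (hPidem : P * P = P)
    (h : ∀ ρ : Matrix (Fin n) (Fin n) ℂ, ρ.PosSemidef → ρ.trace = 1 →
      ∑ s, (Q s * ρ * Q s * P).trace = (ρ * P).trace) :
    ∀ k, P * Q k = Q k * P := by
  set T : Matrix (Fin n) (Fin n) ℂ := ∑ s, Q s * P * Q s with hT
  have hTP : T = P := by
    have hz : T - P = 0 := by
      apply herm_trace_zero
      intro ρ hρ hρtr
      have key := h ρ hρ hρtr
      have hcyc : ∀ s, (Q s * ρ * Q s * P).trace = (ρ * (Q s * P * Q s)).trace := by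
        intro s
        rw [show Q s * ρ * Q s * P = (Q s * ρ) * (Q s * P) from by noncomm_ring,
          Matrix.trace_mul_comm,
          show (Q s * P) * (Q s * ρ) = (Q s * P * Q s) * ρ from by noncomm_ring,
          Matrix.trace_mul_comm]
      rw [Matrix.mul_sub, Matrix.trace_sub, hT, Finset.mul_sum, Matrix.trace_sum]
      rw [← key, sub_eq_zero]
      exact (Finset.sum_congr rfl fun s _ => (hcyc s).symm)
    exact sub_eq_zero.mp hz
  intro k
  have h1 : Q k * T = Q k * P * Q k := by
    rw [hT, Finset.mul_sum, Finset.sum_eq_single k]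
    · rw [show Q k * (Q k * P * Q k) = (Q k * Q k) * P * Q k from by noncomm_ring, hQidem]
    · intro s _ hs
      rw [show Q k * (Q s * P * Q s) = (Q k * Q s) * (P * Q s) from by noncomm_ring,
        hQorth k s (Ne.symm hs), Matrix.zero_mul]
    · simp
  have h2 : T * Q k = Q k * P * Q k := by
    rw [hT, Finset.sum_mul, Finset.sum_eq_single k]
    · rw [show Q k * P * Q k * Q k = Q k * P * (Q k * Q k) from by noncomm_ring, hQidem]
    · intro s _ hs
      rw [show Q s * P * Q s * Q k = (Q s * P) * (Q s * Q k) from by noncomm_ring,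
        hQorth s k hs, Matrix.mul_zero]
    · simp
  calc P * Q k = T * Q k := by rw [hTP]
    _ = Q k * P * Q k := h2
    _ = Q k * T := h1.symm
    _ = Q k * P := by rw [hTP]
end

section
/- Let P be a rank-one orthogonal projection and Q any orthogonal projection on a finite-dimensional complex Hilbert space. If Tr(P Q ρ Q P) = Tr(Q P ρ P Q) for all density operators ρ, then either P Q = 0 or Q P = P. -/
open Matrix ComplexOrder

/-!
Cyclicity of the trace together with `P² = P`, `Q² = Q` turns the hypothesis into
`tr (QPQ ρ) = tr (PQP ρ)` for every state `ρ`; testing it on the pure states `v v* / ‖v‖²`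
gives `QPQ = PQP`. As `P` has rank one, `PQP = c P` for a scalar `c`, and multiplying
`QPQ = c P` on the left by `Q` gives `c QP = c P`. If `c ≠ 0` then `QP = P`; if `c = 0` then
`(QP)ᴴ (QP) = PQP = 0`, so `QP = 0` and `PQ = (QP)ᴴ = 0`.
-/

namespace Matrix

variable {n : Type*} [Fintype n]

theorem trace_sandwich_of_mul_self_eq {R : Type*} [CommSemiring R] {P : Matrix n n R}
    (hP : P * P = P) (Q ρ : Matrix n n R) :
    (P * Q * ρ * Q * P).trace = (Q * P * Q * ρ).trace := by
  rw [trace_mul_comm, ← mul_assoc, ← mul_assoc, ← mul_assoc, hP, trace_mul_comm]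
  simp only [mul_assoc]

theorem exists_mul_mul_eq_smul_of_rank_le_one {K : Type*} [Field K] {P : Matrix n n K}
    (hP : P.rank ≤ 1) (A : Matrix n n K) : ∃ c : K, P * A * P = c • P := by
  obtain ⟨⟨u, y, rfl⟩, hspan⟩ := finrank_le_one_iff.mp hP
  have hmul : ∀ w, ∃ a : K, P *ᵥ w = a • (P *ᵥ y) := fun w => by
    obtain ⟨a, ha⟩ := hspan ⟨P.mulVecLin w, w, rfl⟩
    exact ⟨a, by simpa using (congrArg Subtype.val ha).symm⟩
  obtain ⟨c, hc⟩ := hmul (A *ᵥ (P *ᵥ y))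
  refine ⟨c, ext_iff_mulVec.mpr fun w => ?_⟩
  obtain ⟨a, ha⟩ := hmul w
  calc (P * A * P) *ᵥ w = a • (P *ᵥ (A *ᵥ (P *ᵥ y))) := by
        simp only [← mulVec_mulVec, ha, mulVec_smul]
    _ = (c • P) *ᵥ w := by rw [hc, smul_comm, smul_mulVec, ha]

variable {𝕜 : Type*} [RCLike 𝕜]

theorem dotProduct_mulVec_eq_of_trace_mul_eq {A B : Matrix n n 𝕜}
    (h : ∀ ρ : Matrix n n 𝕜, ρ.PosSemidef → ρ.trace = 1 → (A * ρ).trace = (B * ρ).trace)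
    (x : n → 𝕜) : star x ⬝ᵥ (A *ᵥ x) = star x ⬝ᵥ (B *ᵥ x) := by
  rcases eq_or_ne x 0 with rfl | hx
  · simp
  have hc : star x ⬝ᵥ x ≠ 0 := mt dotProduct_star_self_eq_zero.mp hx
  have htrace : ∀ M : Matrix n n 𝕜, (M * vecMulVec x (star x)).trace = star x ⬝ᵥ (M *ᵥ x) :=
    fun M => by rw [mul_vecMulVec, trace_vecMulVec, dotProduct_comm]
  have hρ : ((star x ⬝ᵥ x)⁻¹ • vecMulVec x (star x)).PosSemidef :=
    (posSemidef_vecMulVec_self_star x).smul (inv_nonneg.mpr (dotProduct_star_self_nonneg x))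
  have hρtr : ((star x ⬝ᵥ x)⁻¹ • vecMulVec x (star x)).trace = 1 := by
    rw [trace_smul, trace_vecMulVec, dotProduct_comm x, smul_eq_mul, inv_mul_cancel₀ hc]
  have := h _ hρ hρtr
  rw [Matrix.mul_smul, Matrix.mul_smul, trace_smul, trace_smul, htrace, htrace] at this
  exact smul_right_injective _ (inv_ne_zero hc) this

open scoped MatrixOrder in
theorem IsHermitian.eq_of_dotProduct_mulVec_eq {A B : Matrix n n 𝕜} (hA : A.IsHermitian)
    (hB : B.IsHermitian) (h : ∀ x, star x ⬝ᵥ (A *ᵥ x) = star x ⬝ᵥ (B *ᵥ x)) : A = B := by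
  have hle : ∀ {A B : Matrix n n 𝕜}, A.IsHermitian → B.IsHermitian →
      (∀ x, star x ⬝ᵥ (A *ᵥ x) = star x ⬝ᵥ (B *ᵥ x)) → A ≤ B := fun hA hB h =>
    le_iff.mpr <| .of_dotProduct_mulVec_nonneg (hB.sub hA) fun x => by
      rw [sub_mulVec, dotProduct_sub, h, sub_self]
  exact le_antisymm (hle hA hB h) (hle hB hA fun x => (h x).symm)

end Matrix

/-- For a rank-one projection `P` and a projection `Q`, the Davies trace
condition forces `PQ = 0` or `QP = P`. -/
theorem rank_one_compat {n : ℕ} (P Q : Matrix (Fin n) (Fin n) ℂ)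
    (hPsa : Pᴴ = P) (hPidem : P * P = P) (hPrank : P.rank = 1)
    (hQsa : Qᴴ = Q) (hQidem : Q * Q = Q)
    (h : ∀ ρ : Matrix (Fin n) (Fin n) ℂ, ρ.PosSemidef → ρ.trace = 1 →
      (P * Q * ρ * Q * P).trace = (Q * P * ρ * P * Q).trace) :
    P * Q = 0 ∨ Q * P = P := by
  have hcorner : Q * P * Q = P * Q * P := by
    refine IsHermitian.eq_of_dotProduct_mulVec_eq ?_ ?_ <|
      dotProduct_mulVec_eq_of_trace_mul_eq fun ρ hρ hρtr => ?_
    · simpa [hQsa] using isHermitian_conjTranspose_mul_mul Q (A := P) hPsa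
    · simpa [hPsa] using isHermitian_conjTranspose_mul_mul P (A := Q) hQsa
    · rw [← trace_sandwich_of_mul_self_eq hPidem, ← trace_sandwich_of_mul_self_eq hQidem]
      exact h ρ hρ hρtr
  obtain ⟨c, hc⟩ := exists_mul_mul_eq_smul_of_rank_le_one hPrank.le Q
  have hcQP : c • (Q * P) = c • P := by
    calc c • (Q * P) = Q * (P * Q * P) := by rw [hc, mul_smul_comm]
      _ = P * Q * P := by rw [← hcorner, ← mul_assoc, ← mul_assoc, hQidem]
      _ = c • P := hc
  by_cases hc0 : c = 0
  · have hQP : Q * P = 0 := conjTranspose_mul_self_eq_zero.mp <| by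
      rw [conjTranspose_mul, hPsa, hQsa, ← mul_assoc, mul_assoc P, hQidem, hc, hc0, zero_smul]
    left
    rw [← hPsa, ← hQsa, ← conjTranspose_mul, hQP, conjTranspose_zero]
  · exact Or.inr (smul_right_injective _ hc0 hcQP)
end

section
/- Let P, Q be orthogonal projections on a finite-dimensional complex Hilbert space that do not commute. Then there exists a density operator ρ such that Tr(Q P ρ P Q) ≠ Tr(P Q ρ Q P). -/
open Matrix ComplexOrder

lemma trace_mul_vecMulVec {n : ℕ} (M : Matrix (Fin n) (Fin n) ℂ) (v : Fin n → ℂ) :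
    (M * vecMulVec v (star v)).trace = star v ⬝ᵥ (M *ᵥ v) := by
  simp only [trace, diag_apply, Matrix.mul_apply, vecMulVec_apply, dotProduct, mulVec,
    Pi.star_apply, Finset.mul_sum]
  exact Finset.sum_congr rfl fun i _ => Finset.sum_congr rfl fun j _ => by ring

lemma vecMulVec_mulVec' {n : ℕ} (v x : Fin n → ℂ) :
    vecMulVec v (star v) *ᵥ x = (star v ⬝ᵥ x) • v := by
  funext i
  simp only [mulVec, dotProduct, vecMulVec_apply, Pi.star_apply, Pi.smul_apply, smul_eq_mul,
    Finset.sum_mul]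
  exact Finset.sum_congr rfl fun j _ => by ring

/-- Contrapositive of Davies' theorem: non-commuting projections are witnessed
by an order-dependent joint observation probability. -/
theorem noncommute_witness {n : ℕ} (P Q : Matrix (Fin n) (Fin n) ℂ)
    (hPsa : Pᴴ = P) (hPidem : P * P = P) (hQsa : Qᴴ = Q) (hQidem : Q * Q = Q)
    (hnc : P * Q ≠ Q * P) :
    ∃ ρ : Matrix (Fin n) (Fin n) ℂ, ρ.PosSemidef ∧ ρ.trace = 1 ∧
      (Q * P * ρ * P * Q).trace ≠ (P * Q * ρ * Q * P).trace := by
  -- Step 1 : P*Q*P ≠ Q*P*Q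
  have hD : P * Q * P - Q * P * Q ≠ 0 := by
    intro h
    apply hnc
    have hM : P * Q * P = Q * P * Q := sub_eq_zero.mp h
    have hA : (P * Q - Q * P)ᴴ * (P * Q - Q * P) = 0 := by
      simp only [conjTranspose_sub, conjTranspose_mul, hPsa, hQsa]
      have expand : (Q * P - P * Q) * (P * Q - Q * P)
          = Q * P * P * Q - Q * P * Q * P - P * Q * P * Q + P * Q * Q * P := by
        noncomm_ring
      have e1 : Q * P * P * Q = Q * P * Q := by
        rw [mul_assoc Q P P, hPidem]
      have e2 : P * Q * Q * P = P * Q * P := by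
        rw [mul_assoc P Q Q, hQidem]
      have e3 : Q * P * Q * P = P * Q * P := by
        rw [← hM, mul_assoc (P * Q) P P, hPidem]
      have e4 : P * Q * P * Q = Q * P * Q := by
        rw [hM, mul_assoc (Q * P) Q Q, hQidem]
      rw [expand, e1, e2, e3, e4]
      abel
    have := conjTranspose_mul_self_eq_zero.mp hA
    exact sub_eq_zero.mp this
  set D : Matrix (Fin n) (Fin n) ℂ := P * Q * P - Q * P * Q with hDdef
  -- Step 2 : find a vector on which the quadratic form of D is nonzero
  have hT : Matrix.toEuclideanLin D ≠ 0 := by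
    intro h
    exact hD ((LinearEquiv.map_eq_zero_iff _).mp h)
  obtain ⟨x, hx⟩ := not_forall.mp (fun hall => hT ((inner_map_self_eq_zero _).mp hall))
  set v : Fin n → ℂ := WithLp.equiv 2 (Fin n → ℂ) x with hvdef
  have hform : star (D *ᵥ v) ⬝ᵥ v ≠ 0 := by
    intro h
    apply hx
    rw [EuclideanSpace.inner_eq_star_dotProduct, dotProduct_comm]
    simpa [Matrix.toEuclideanLin_apply, hvdef] using h
  have hc : star v ⬝ᵥ (D *ᵥ v) ≠ 0 := by
    rw [star_dotProduct]
    exact star_ne_zero.mpr hform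
  have hv : v ≠ 0 := by
    intro h
    apply hc
    simp [h]
  -- the normalization constant
  set t : ℂ := star v ⬝ᵥ v with htdef
  have ht0 : t ≠ 0 := fun h => hv (dotProduct_star_self_eq_zero.mp h)
  have htnn : 0 ≤ t := dotProduct_star_self_nonneg v
  obtain ⟨htre, htim⟩ := Complex.nonneg_iff.mp htnn
  have htreal : (starRingEnd ℂ) t = t := Complex.conj_eq_iff_im.mpr htim.symm
  have htinv_nn : 0 ≤ t⁻¹ := by
    have : t = ((t.re : ℝ) : ℂ) := Complex.ext rfl (by simpa using htim.symm)
    rw [this, ← Complex.ofReal_inv]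
    exact Complex.zero_le_real.mpr (inv_nonneg.mpr htre)
  -- the density matrix
  set W : Matrix (Fin n) (Fin n) ℂ := vecMulVec v (star v) with hWdef
  refine ⟨t⁻¹ • W, posSemidef_iff_dotProduct_mulVec.mpr ⟨?_, ?_⟩, ?_, ?_⟩
  · -- Hermitian
    rw [hWdef]
    rw [Matrix.IsHermitian]
    rw [conjTranspose_smul]
    congr 1
    · simpa using htreal
    · ext i j
      simp [vecMulVec_apply, mul_comm]
  · -- nonneg quadratic form
    intro y
    rw [smul_mulVec, dotProduct_smul, hWdef, vecMulVec_mulVec', dotProduct_smul]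
    have : star y ⬝ᵥ v = star (star v ⬝ᵥ y) := by
      rw [star_dotProduct]
    rw [smul_eq_mul, smul_eq_mul, this]
    exact mul_nonneg htinv_nn (mul_star_self_nonneg _)
  · -- trace 1
    rw [trace_smul, smul_eq_mul]
    have : W.trace = t := by
      simp only [hWdef, htdef, trace, diag_apply, vecMulVec_apply, dotProduct, Pi.star_apply]
      exact Finset.sum_congr rfl fun i _ => mul_comm _ _
    rw [this, inv_mul_cancel₀ ht0]
  · -- order dependence
    have key : ∀ M : Matrix (Fin n) (Fin n) ℂ,
        (M * (t⁻¹ • W)).trace = t⁻¹ * (star v ⬝ᵥ (M *ᵥ v)) := by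
      intro M
      rw [mul_smul_comm, trace_smul, smul_eq_mul, trace_mul_vecMulVec]
    have e1 : (Q * P * (t⁻¹ • W) * P * Q).trace = ((P * Q * P) * (t⁻¹ • W)).trace := by
      rw [trace_mul_comm]
      have h1 : Q * (Q * P * (t⁻¹ • W) * P) = Q * P * (t⁻¹ • W) * P := by
        simp only [← Matrix.mul_assoc]
        rw [hQidem]
      rw [h1, trace_mul_comm]
      congr 1
      simp only [← Matrix.mul_assoc]
    have e2 : (P * Q * (t⁻¹ • W) * Q * P).trace = ((Q * P * Q) * (t⁻¹ • W)).trace := by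
      rw [trace_mul_comm]
      have h1 : P * (P * Q * (t⁻¹ • W) * Q) = P * Q * (t⁻¹ • W) * Q := by
        simp only [← Matrix.mul_assoc]
        rw [hPidem]
      rw [h1, trace_mul_comm]
      congr 1
      simp only [← Matrix.mul_assoc]
    rw [e1, e2, key, key]
    intro heq
    apply hc
    have h2 : star v ⬝ᵥ ((P * Q * P) *ᵥ v) = star v ⬝ᵥ ((Q * P * Q) *ᵥ v) :=
      mul_left_cancel₀ (inv_ne_zero ht0) heq
    rw [hDdef, Matrix.sub_mulVec, dotProduct_sub, h2, sub_self]
end
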